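/- arXiv:2112.03746 — 2 statements merged into one kernel-verified Lean document; each statement's English description precedes it below -/
import Mathlib

section
/- Let Σ be a finite alphabet with |Σ| ≥ 2 and let L ⊆ Σ* be a nonempty finite language whose Myhill–Nerode equivalence ≡_L has exactly m equivalence classes on Σ* (i.e., the minimal DFA accepting L has m states). If a 1QFAC over Σ with k classical states recognizes L with cut-point λ isolated by ε for some λ ∈ (0,1) and ε > 0, then m ≤ 2|Σ|^{k−2}. -/
noncomputable section

/-- The `n`-dimensional complex Hilbert space `ℂⁿ`. -/
abbrev QState (n : ℕ) := EuclideanSpace ℂ (Fin n)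

/-- Apply a matrix to a vector of `ℂⁿ`. -/
def mApply {n : ℕ} (M : Matrix (Fin n) (Fin n) ℂ) (v : QState n) : QState n :=
  Matrix.toEuclideanLin M v

/-- Myhill–Nerode equivalence: `x ≡_L y` iff `∀ z, xz ∈ L ↔ yz ∈ L`. -/
def mnEquiv {α : Type} (L : Set (List α)) (x y : List α) : Prop :=
  ∀ z : List α, x ++ z ∈ L ↔ y ++ z ∈ L

/-- Myhill–Nerode equivalence as a setoid. -/
def mnSetoid {α : Type} (L : Set (List α)) : Setoid (List α) where
  r := mnEquiv L
  iseqv := ⟨fun _ _ => Iff.rfl, fun h z => (h z).symm, fun h1 h2 z => (h1 z).trans (h2 z)⟩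

/-- A 1QFAC: classical states `S` with initial state and transitions, an `n`-dimensional
quantum part with a unit initial vector, a unitary for each (classical state, letter),
and an orthogonal projection (accepting measurement) for each classical state. -/
structure QFAC (Alph : Type) (S : Type) (n : ℕ) where
  s0 : S
  tr : S → Alph → S
  ψ0 : QState n
  ψ0_unit : ‖ψ0‖ = 1
  U : S → Alph → Matrix (Fin n) (Fin n) ℂ
  U_unitary : ∀ s σ, U s σ ∈ Matrix.unitaryGroup (Fin n) ℂ
  P : S → Matrix (Fin n) (Fin n) ℂ
  P_proj : ∀ s, (P s).conjTranspose = P s ∧ P s * P s = P s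

namespace QFAC
variable {Alph S : Type} {n : ℕ}

/-- `s_x`: the classical state reached after reading `x`. -/
def sState (A : QFAC Alph S n) (x : List Alph) : S := x.foldl A.tr A.s0

/-- `|ψ_x⟩`: the final quantum state after reading `x`. -/
def qState (A : QFAC Alph S n) (x : List Alph) : QState n :=
  (x.foldl (fun p σ => (A.tr p.1 σ, mApply (A.U p.1 σ) p.2)) (A.s0, A.ψ0)).2

/-- Acceptance probability `‖P_{s_x,acc}|ψ_x⟩‖²`. -/
def probAcc (A : QFAC Alph S n) (x : List Alph) : ℝ :=
  ‖mApply (A.P (A.sState x)) (A.qState x)‖ ^ 2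

/-- Recognition with cut-point `lam` isolated by `ε`. -/
def Recognizes (A : QFAC Alph S n) (L : Set (List Alph)) (lam ε : ℝ) : Prop :=
  (∀ x ∈ L, lam + ε ≤ A.probAcc x) ∧ (∀ x ∉ L, A.probAcc x ≤ lam - ε)

end QFAC

/-!
If a word `u ∈ L` had `|u| + 2 > k`, the classical states met while reading `u` followed by one
more letter would repeat, giving `u = p q` and a nonempty `v` with `s_{pv} = s_p`. Reading `v`
from `s_p` acts on the quantum state by a fixed unitary `V`, and in finite dimension the orbit
`Vᵈ ψ` returns arbitrarily close to `ψ` for arbitrarily large `d`. The acceptance probability of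
`p vᵈ q` depends continuously on `Vᵈ ψ_p`, so by isolation of the cut-point infinitely many
`p vᵈ q` lie in `L`, contradicting finiteness. Hence the words of `L` have length at most `k - 2`,
and every class of `≡_L` is either that of a word shorter than `k - 2` or one of two classes of
longer words (those in `L`, and the dead ones): `m ≤ ∑_{i < k-2} |Σ|^i + 2 ≤ 2 |Σ|^(k-2)`.
-/

open Filter Topology

theorem LinearIsometry.frequently_pow_apply_mem_nhds {R E : Type*} [Semiring R]
    [SeminormedAddCommGroup E] [Module R E] [ProperSpace E] (f : E →ₗᵢ[R] E) (x : E)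
    {U : Set E} (hU : U ∈ 𝓝 x) : ∃ᶠ d in atTop, (f ^ d) x ∈ U := by
  obtain ⟨η, hη, hball⟩ := Metric.mem_nhds_iff.mp hU
  refine frequently_atTop.mpr fun N => ?_
  -- a return of `f ^ (N + 1)` is a return of `f` after at least `N` steps
  obtain ⟨_, _, φ, hφ, hlim⟩ := tendsto_subseq_of_bounded
    (Metric.isBounded_closedBall (x := 0) (r := ‖x‖))
    (x := fun j => ((f ^ (N + 1)) ^ j) x) fun j => by simp [Metric.mem_closedBall]
  obtain ⟨j, hj⟩ := Metric.cauchySeq_iff'.mp hlim.cauchySeq η hη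
  have hlt : φ j < φ (j + 1) := hφ (Nat.lt_succ_self j)
  refine ⟨(N + 1) * (φ (j + 1) - φ j), by nlinarith [Nat.sub_pos_of_lt hlt], hball ?_⟩
  rw [Metric.mem_ball, pow_mul, dist_comm, ← ((f ^ (N + 1)) ^ φ j).dist_map,
    ← Function.comp_apply (f := ⇑((f ^ (N + 1)) ^ φ j)), ← LinearIsometry.coe_mul, ← pow_add,
    Nat.add_sub_cancel' hlt.le]
  simpa [dist_comm] using hj (j + 1) (Nat.le_succ j)

theorem exists_foldl_loop_of_card_le {α S : Type*} [Fintype S] (f : S → α → S) (s : S) (a : α)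
    (u : List α) (hu : Fintype.card S ≤ u.length + 1) :
    ∃ p q v : List α, u = p ++ q ∧ v ≠ [] ∧ (p ++ v).foldl f s = p.foldl f s := by
  -- pigeonhole on the `u.length + 2` prefixes of `u ++ [a]`
  set w := u ++ [a]
  obtain ⟨i, j, hij, heq⟩ := Fintype.exists_ne_map_eq_of_card_lt
    (fun i : Fin (u.length + 2) => (w.take i).foldl f s) (by simp; omega)
  wlog hlt : i < j generalizing i j
  · exact this j i hij.symm heq.symm (hij.symm.lt_of_le (not_lt.mp hlt))
  have hi : (i : ℕ) ≤ u.length := by omega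
  have hwi : w.take i = u.take i := List.take_append_of_le_length hi
  refine ⟨u.take i, u.drop i, (w.take j).drop i, (List.take_append_drop _ _).symm, ?_, ?_⟩
  · have : (i : ℕ) < ((w.take j).length) := by simp [w]; omega
    simpa [List.drop_eq_nil_iff] using this
  · have hij : w.take i ++ (w.take j).drop i = w.take j := by
      have := List.take_append_drop (i : ℕ) (w.take j)
      rwa [List.take_take, min_eq_left (by omega)] at this
    rw [← hwi, hij]
    exact heq.symm

theorem continuous_mApply {n : ℕ} (M : Matrix (Fin n) (Fin n) ℂ) : Continuous (mApply M) :=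
  LinearMap.continuous_of_finiteDimensional _

namespace QFAC

variable {Alph S : Type} {n : ℕ} (A : QFAC Alph S n)

def unitaryOp (s : S) (σ : Alph) : QState n →ₗᵢ[ℂ] QState n :=
  (Unitary.linearIsometryEquiv
    ⟨Matrix.toEuclideanCLM (n := Fin n) (𝕜 := ℂ) (A.U s σ),
      Unitary.map_mem _ (A.U_unitary s σ)⟩).toLinearIsometry

def evolution : S → List Alph → QState n →ₗᵢ[ℂ] QState n
  | _, [] => 1
  | s, σ :: v => evolution (A.tr s σ) v * A.unitaryOp s σ

theorem foldl_run_eq (v : List Alph) (s : S) (ψ : QState n) :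
    v.foldl (fun p σ => (A.tr p.1 σ, mApply (A.U p.1 σ) p.2)) (s, ψ) =
      (v.foldl A.tr s, A.evolution s v ψ) := by
  induction v generalizing s ψ with
  | nil => rfl
  | cons σ v ih => exact ih (A.tr s σ) (mApply (A.U s σ) ψ)

theorem sState_append (x y : List Alph) : A.sState (x ++ y) = y.foldl A.tr (A.sState x) :=
  List.foldl_append ..

theorem qState_append (x y : List Alph) :
    A.qState (x ++ y) = A.evolution (A.sState x) y (A.qState x) := by
  simp only [qState, List.foldl_append, foldl_run_eq]
  rfl

theorem probAcc_append (x y : List Alph) :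
    A.probAcc (x ++ y) =
      ‖mApply (A.P (y.foldl A.tr (A.sState x))) (A.evolution (A.sState x) y (A.qState x))‖ ^ 2 := by
  rw [probAcc, sState_append, qState_append]

theorem sState_append_flatten_replicate {p v : List Alph}
    (hloop : A.sState (p ++ v) = A.sState p) (d : ℕ) :
    A.sState (p ++ (List.replicate d v).flatten) = A.sState p := by
  induction d with
  | zero => simp
  | succ d ih =>
    rw [List.replicate_succ', List.flatten_append, List.flatten_singleton, ← List.append_assoc,
      sState_append, ih, ← sState_append, hloop]

theorem qState_append_flatten_replicate {p v : List Alph}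
    (hloop : A.sState (p ++ v) = A.sState p) (d : ℕ) :
    A.qState (p ++ (List.replicate d v).flatten) =
      (A.evolution (A.sState p) v ^ d) (A.qState p) := by
  induction d with
  | zero => simp
  | succ d ih =>
    rw [List.replicate_succ', List.flatten_append, List.flatten_singleton, ← List.append_assoc,
      qState_append, ih, sState_append_flatten_replicate A hloop, pow_succ', LinearIsometry.coe_mul,
      Function.comp_apply]

variable {A}

theorem Recognizes.infinite_of_loop {L : Set (List Alph)} {lam ε : ℝ}
    (hrec : A.Recognizes L lam ε) (hε : 0 < ε) {p q v : List Alph} (hv : v ≠ [])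
    (hloop : A.sState (p ++ v) = A.sState p) (hpq : p ++ q ∈ L) : L.Infinite := by
  set t := A.sState p
  set F : QState n → ℝ := fun ψ => ‖mApply (A.P (q.foldl A.tr t)) (A.evolution t q ψ)‖ ^ 2
  have hF : ∀ d, A.probAcc (p ++ (List.replicate d v).flatten ++ q) =
      F ((A.evolution t v ^ d) (A.qState p)) := fun d => by
    rw [probAcc_append, sState_append_flatten_replicate A hloop,
      qState_append_flatten_replicate A hloop]
  have hFc : Continuous F := ((continuous_mApply _).comp (A.evolution t q).continuous).norm.pow 2
  have hstart : lam - ε < F (A.qState p) := by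
    have h0 : A.probAcc (p ++ q) = F (A.qState p) := by simpa using hF 0
    linarith [hrec.1 _ hpq]
  have hfreq : ∃ᶠ d in atTop, p ++ (List.replicate d v).flatten ++ q ∈ L :=
    (LinearIsometry.frequently_pow_apply_mem_nhds _ _
      (hFc.continuousAt.preimage_mem_nhds (Ioi_mem_nhds hstart))).mono fun d hd => by
      by_contra hd'
      exact (hF d ▸ hrec.2 _ hd').not_gt hd
  have hinj : Function.Injective fun d => p ++ (List.replicate d v).flatten ++ q := fun d d' h => by
    simpa [hv] using congrArg List.length h
  exact ((Nat.frequently_atTop_iff_infinite.mp hfreq).image hinj.injOn).mono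
    (Set.image_subset_iff.mpr fun d hd => hd)

theorem Recognizes.length_add_two_le_card [Fintype S] {L : Set (List Alph)} {lam ε : ℝ}
    (hrec : A.Recognizes L lam ε) (hε : 0 < ε) (hL : L.Finite) (a : Alph) {u : List Alph}
    (hu : u ∈ L) : u.length + 2 ≤ Fintype.card S := by
  by_contra h
  obtain ⟨p, q, v, rfl, hv, hloop⟩ := exists_foldl_loop_of_card_le A.tr A.s0 a u (by omega)
  exact hrec.infinite_of_loop hε hv hloop hu hL

end QFAC

theorem Nat.card_quotient_le_of_ker_le {α β : Type*} [Finite β] {r : Setoid α} (f : α → β)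
    (hf : Setoid.ker f ≤ r) : Nat.card (Quotient r) ≤ Nat.card β :=
  Nat.card_le_card_of_injective (fun c => f c.out) fun c c' h => by
    simpa using Quotient.sound (s := r) (hf h)

theorem mnEquiv_of_length_le {α : Type} {L : Set (List α)} {ℓ : ℕ}
    (hL : ∀ u ∈ L, u.length ≤ ℓ) {x y : List α} (hx : ℓ ≤ x.length) (hy : ℓ ≤ y.length)
    (hxy : x ∈ L ↔ y ∈ L) : mnEquiv L x y
  | [] => by simpa using hxy
  | b :: z => iff_of_false (fun h => by have := hL _ h; simp at this; omega)
      (fun h => by have := hL _ h; simp at this; omega)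

theorem card_quotient_mnSetoid_le {α : Type} [Fintype α] {L : Set (List α)} {ℓ : ℕ}
    (hL : ∀ u ∈ L, u.length ≤ ℓ) :
    Nat.card (Quotient (mnSetoid L)) ≤ ∑ i ∈ Finset.range ℓ, Fintype.card α ^ i + 2 := by
  classical
  let f : List α → (Σ i : Fin ℓ, Fin i → α) ⊕ Bool := fun x =>
    if h : x.length < ℓ then .inl ⟨⟨x.length, h⟩, x.get⟩ else .inr (decide (x ∈ L))
  have hf : Setoid.ker f ≤ mnSetoid L := by
    intro x y (hxy : f x = f y)
    by_cases hx : x.length < ℓ <;> by_cases hy : y.length < ℓ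
    · have h := congrArg (Sum.elim (fun s => List.ofFn s.2) fun _ => []) hxy
      simp only [f, hx, hy, dif_pos, Sum.elim_inl, List.ofFn_get] at h
      exact h ▸ fun _ => Iff.rfl
    all_goals simp only [f, hx, hy, dif_pos, dif_neg, not_false_eq_true, reduceCtorEq,
      Sum.inr.injEq, decide_eq_decide] at hxy
    exact mnEquiv_of_length_le hL (by omega) (by omega) (by simpa using hxy)
  refine (Nat.card_quotient_le_of_ker_le f hf).trans_eq ?_
  simp [Fin.sum_univ_eq_sum_range (fun i => Fintype.card α ^ i)]

theorem Nat.geomSum_range_add_two_le {c : ℕ} (hc : 2 ≤ c) (ℓ : ℕ) :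
    ∑ i ∈ Finset.range ℓ, c ^ i + 2 ≤ 2 * c ^ ℓ := by
  have : ∑ i ∈ Finset.range ℓ, c ^ i < c ^ ℓ := Nat.geomSum_lt hc fun _ => Finset.mem_range.mp
  have := Nat.one_le_pow ℓ c (by omega)
  omega

theorem stmt_8_general {Alph S : Type} [Fintype Alph] (hAlph : 2 ≤ Fintype.card Alph)
    [Fintype S] {n k m : ℕ} (hk : Fintype.card S = k)
    (L : Set (List Alph)) (hLfin : L.Finite)
    (hm : Nat.card (Quotient (mnSetoid L)) = m)
    (A : QFAC Alph S n) (lam ε : ℝ) (hε : 0 < ε)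
    (hrec : A.Recognizes L lam ε) :
    m ≤ 2 * Fintype.card Alph ^ (k - 2) := by
  subst hk hm
  obtain ⟨a⟩ : Nonempty Alph := Fintype.card_pos_iff.mp (by omega)
  have hshort (u : List Alph) (hu : u ∈ L) : u.length ≤ Fintype.card S - 2 := by
    have := hrec.length_add_two_le_card hε hLfin a hu
    omega
  calc Nat.card (Quotient (mnSetoid L))
      ≤ ∑ i ∈ Finset.range (Fintype.card S - 2), Fintype.card Alph ^ i + 2 :=
        card_quotient_mnSetoid_le hshort
    _ ≤ 2 * Fintype.card Alph ^ (Fintype.card S - 2) := Nat.geomSum_range_add_two_le hAlph _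

/-- For `|Alph| ≥ 2` and a nonempty finite language `L` whose
Myhill–Nerode equivalence has exactly `m` classes, any 1QFAC with `k` classical states
recognizing `L` with isolated cut-point satisfies `m ≤ 2|Alph|^(k−2)`. -/
theorem stmt_8 {Alph S : Type} [Fintype Alph] (hAlph : 2 ≤ Fintype.card Alph)
    [Fintype S] {n k m : ℕ} (hk : Fintype.card S = k)
    (L : Set (List Alph)) (hLfin : L.Finite) (hLne : L.Nonempty)
    (hm : Nat.card (Quotient (mnSetoid L)) = m)
    (A : QFAC Alph S n) (lam ε : ℝ) (hlam : 0 < lam ∧ lam < 1) (hε : 0 < ε)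
    (hrec : A.Recognizes L lam ε) :
    m ≤ 2 * Fintype.card Alph ^ (k - 2) :=
  stmt_8_general hAlph hk L hLfin hm A lam ε hε hrec
end
end

section
/- For every integer h ≥ 1, every prime p, and every integer k ≥ 1: no k-letter 1QFA over the alphabet {0,1} recognizes L(h,p) with an isolated cut-point. That is, for every k-letter 1QFA A over {0,1} and all λ ∈ (0,1) and ε > 0, A does not recognize L(h,p) with cut-point λ isolated by ε. (In particular, taking k = 1, no MO-1QFA recognizes L(h,p) with an isolated cut-point.) -/
/-!
After any prefix ending in `0^{k-1}`, the windows seen while reading `y = 110^{k-1}` do not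
depend on that prefix, so reading `y` moves the state by one fixed isometry `f` of the unit
sphere of `ℂⁿ`. By compactness `f` is recurrent: `f^d v` comes arbitrarily close to `v` for some
`d ≥ 1`. Hence `0^a 1 0^h` and `0^a y^d 1 0^h` have nearly equal acceptance probabilities,
although for a suitable `a` the first word lies in `L(h,p)` and the second does not, since a
block `1^i 0^j 1 0^h` with `h ≥ 1` is never followed directly by `1`.
-/

noncomputable section

/-- A `k`-letter 1QFA. `none : Option Alph` plays the role of the blank symbol `Λ`. -/
structure MultiQFA (Alph : Type) (k n : ℕ) where
  ψ0 : QState n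
  ψ0_unit : ‖ψ0‖ = 1
  U : List (Option Alph) → Matrix (Fin n) (Fin n) ℂ
  U_unitary : ∀ w, U w ∈ Matrix.unitaryGroup (Fin n) ℂ
  P : Matrix (Fin n) (Fin n) ℂ
  P_proj : P.conjTranspose = P ∧ P * P = P

namespace MultiQFA
variable {Alph : Type} {k n : ℕ}

/-- The length-`k` suffix of `Λ^{k-1}` followed by the prefix read so far. -/
def window (k : ℕ) (pre : List Alph) : List (Option Alph) :=
  let l : List (Option Alph) := List.replicate (k - 1) none ++ pre.map some
  l.drop (l.length - k)

/-- `|ψ_x⟩ = U_{w_m} ⋯ U_{w_1} |ψ₀⟩` where `w_i` is the window after `i` letters. -/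
def qState (A : MultiQFA Alph k n) (x : List Alph) : QState n :=
  (List.range x.length).foldl
    (fun v i => mApply (A.U (window k (x.take (i + 1)))) v) A.ψ0

def probAcc (A : MultiQFA Alph k n) (x : List Alph) : ℝ := ‖mApply A.P (A.qState x)‖ ^ 2

def Recognizes (A : MultiQFA Alph k n) (L : Set (List Alph)) (lam ε : ℝ) : Prop :=
  (∀ x ∈ L, lam + ε ≤ A.probAcc x) ∧ (∀ x ∉ L, A.probAcc x ≤ lam - ε)

end MultiQFA

/-- The blocks `1^a 0^b 1 0^h` with `a ≥ 0`, `b ≥ 1`; `true` = 1, `false` = 0. -/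
def blockLang (h : ℕ) : Set (List Bool) :=
  {w | ∃ a b : ℕ, 1 ≤ b ∧
    w = List.replicate a true ++ List.replicate b false ++ [true] ++ List.replicate h false}

/-- Kleene star of a set of strings. -/
def kleeneStar (P : Set (List Bool)) : Set (List Bool) :=
  {x | ∃ l : List (List Bool), (∀ w ∈ l, w ∈ P) ∧ x = l.flatten}

/-- `L(h,p) = (1*00*10^h)* ∩ {w : |w| ≡ 0 (mod p)}`. -/
def Lhp (h p : ℕ) : Set (List Bool) :=
  {w | w ∈ kleeneStar (blockLang h) ∧ w.length % p = 0}

theorem Isometry.iterate {X : Type*} [PseudoEMetricSpace X] {f : X → X} (hf : Isometry f) :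
    ∀ m : ℕ, Isometry f^[m]
  | 0 => isometry_id
  | m + 1 => (Isometry.iterate hf m).comp hf

theorem Isometry.exists_pos_dist_iterate_lt {X : Type*} [PseudoMetricSpace X] {f : X → X}
    (hf : Isometry f) {K : Set X} (hK : IsCompact K) {x : X} (hx : ∀ m, f^[m] x ∈ K)
    {ε : ℝ} (hε : 0 < ε) : ∃ d, 0 < d ∧ dist (f^[d] x) x < ε := by
  obtain ⟨_, -, φ, hφ, hlim⟩ := hK.tendsto_subseq hx
  obtain ⟨N, hN⟩ := Metric.cauchySeq_iff'.mp (Filter.Tendsto.cauchySeq hlim) ε hε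
  have hgap : φ N < φ (N + 1) := hφ N.lt_succ_self
  refine ⟨φ (N + 1) - φ N, by omega, ?_⟩
  calc dist (f^[φ (N + 1) - φ N] x) x
      = dist (f^[φ N] (f^[φ (N + 1) - φ N] x)) (f^[φ N] x) := ((hf.iterate _).dist_eq _ _).symm
    _ = dist (f^[φ (N + 1)] x) (f^[φ N] x) := by
        rw [← Function.iterate_add_apply, Nat.add_sub_cancel' hgap.le]
    _ < ε := hN (N + 1) N.le_succ

theorem isometry_foldl {ι X : Type*} [PseudoEMetricSpace X] {g : ι → X → X}
    (hg : ∀ i, Isometry (g i)) :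
    ∀ l : List ι, Isometry fun x => l.foldl (fun x i => g i x) x
  | [] => isometry_id
  | i :: l => (isometry_foldl hg l).comp (hg i)

theorem norm_foldl {ι E : Type*} [SeminormedAddCommGroup E] {g : ι → E → E}
    (hg : ∀ i x, ‖g i x‖ = ‖x‖) :
    ∀ (l : List ι) (x : E), ‖l.foldl (fun x i => g i x) x‖ = ‖x‖
  | [], _ => rfl
  | i :: l, x => (norm_foldl hg l (g i x)).trans (hg i x)

section MatrixAction

variable {n : ℕ} {M : Matrix (Fin n) (Fin n) ℂ}

theorem mApply_sub (M : Matrix (Fin n) (Fin n) ℂ) (v w : QState n) :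
    mApply M (v - w) = mApply M v - mApply M w :=
  map_sub (Matrix.toEuclideanLin M) v w

theorem norm_mApply_of_mem_unitaryGroup (hM : M ∈ Matrix.unitaryGroup (Fin n) ℂ)
    (v : QState n) : ‖mApply M v‖ = ‖v‖ := by
  have hU : Matrix.toEuclideanCLM (n := Fin n) (𝕜 := ℂ) M ∈ unitary (QState n →L[ℂ] QState n) :=
    Unitary.map_mem _ hM
  exact ContinuousLinearMap.norm_map_of_mem_unitary hU v

theorem isometry_mApply_of_mem_unitaryGroup (hM : M ∈ Matrix.unitaryGroup (Fin n) ℂ) :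
    Isometry (mApply M) :=
  (AddMonoidHomClass.isometry_iff_norm (Matrix.toEuclideanLin M)).mpr
    (norm_mApply_of_mem_unitaryGroup hM)

theorem norm_mApply_le_of_isStarProjection (hM : IsStarProjection M) (v : QState n) :
    ‖mApply M v‖ ≤ ‖v‖ := by
  have hP : IsStarProjection (Matrix.toEuclideanCLM (n := Fin n) (𝕜 := ℂ) M) := hM.map _
  exact ((Matrix.toEuclideanCLM (n := Fin n) (𝕜 := ℂ) M).le_of_opNorm_le hP.norm_le v).trans_eq
    (one_mul _)

end MatrixAction

namespace MultiQFA

variable {Alph : Type} {k n : ℕ} (A : MultiQFA Alph k n)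

theorem window_append_of_le_length (s : List Alph) {t : List Alph} (ht : k ≤ t.length) :
    window k (s ++ t) = window k t := by
  simp only [window, List.map_append, ← List.append_assoc, List.drop_append, List.length_append,
    List.length_replicate, List.length_map]
  have hs : k - 1 + s.length + t.length - k - (k - 1 + s.length) = t.length - k := by omega
  have ht' : k - 1 + t.length - k - (k - 1) = t.length - k := by omega
  rw [hs, ht']
  simp (disch := simp only [List.length_replicate, List.length_map]; omega) only
    [List.drop_eq_nil_of_le, List.nil_append]

/-- Continue a run of `A` from state `v` on the word `w`, the word `c` having been read already. -/
def run (c w : List Alph) (v : QState n) : QState n :=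
  (List.range w.length).foldl (fun v i => mApply (A.U (window k (c ++ w.take (i + 1)))) v) v

theorem isometry_run (c w : List Alph) : Isometry (A.run c w) :=
  isometry_foldl (fun _ => isometry_mApply_of_mem_unitaryGroup (A.U_unitary _)) _

theorem norm_run (c w : List Alph) (v : QState n) : ‖A.run c w v‖ = ‖v‖ :=
  norm_foldl (fun _ => norm_mApply_of_mem_unitaryGroup (A.U_unitary _)) _ _

theorem norm_qState (x : List Alph) : ‖A.qState x‖ = 1 :=
  (A.norm_run [] x A.ψ0).trans A.ψ0_unit

theorem qState_append (s w : List Alph) : A.qState (s ++ w) = A.run s w (A.qState s) := by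
  simp only [qState, run, List.length_append, List.range_add, List.foldl_append, List.foldl_map,
    Nat.add_assoc, List.take_length_add_append]
  congr 1
  refine List.foldl_ext _ _ _ fun v i hi => ?_
  rw [List.take_append_of_le_length (by simp at hi; omega)]

theorem run_append_context (s : List Alph) {c : List Alph} (hc : k - 1 ≤ c.length)
    (w : List Alph) : A.run (s ++ c) w = A.run c w := by
  funext v
  refine List.foldl_ext _ _ _ fun v i hi => ?_
  rw [List.append_assoc, window_append_of_le_length]
  simp only [List.mem_range] at hi
  simp only [List.length_append, List.length_take]
  omega

theorem qState_append_of_suffix {c s : List Alph} (hcs : c <:+ s) (hc : k - 1 ≤ c.length)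
    (w : List Alph) : A.qState (s ++ w) = A.run c w (A.qState s) := by
  obtain ⟨s', rfl⟩ := hcs
  rw [qState_append, run_append_context A s' hc]

theorem qState_append_flatten_replicate_append {c y : List Alph} (hcy : c <:+ y)
    (hc : k - 1 ≤ c.length) (m : ℕ) (z : List Alph) :
    ∀ {s : List Alph}, c <:+ s → A.qState (s ++ (List.replicate m y).flatten ++ z) =
      A.run c z ((A.run c y)^[m] (A.qState s)) := by
  induction m with
  | zero =>
    intro s hcs
    simpa using A.qState_append_of_suffix hcs hc z
  | succ m ih =>
    intro s hcs
    have hsy : c <:+ s ++ y := hcy.trans (List.suffix_append s y)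
    rw [List.replicate_succ, List.flatten_cons, ← List.append_assoc, ih hsy,
      A.qState_append_of_suffix hcs hc y, Function.iterate_succ_apply]

theorem abs_probAcc_sub_le (x y : List Alph) :
    |A.probAcc x - A.probAcc y| ≤ 2 * ‖A.qState x - A.qState y‖ := by
  have hP : IsStarProjection A.P := isStarProjection_iff'.mpr ⟨A.P_proj.2, A.P_proj.1⟩
  set a := ‖mApply A.P (A.qState x)‖
  set b := ‖mApply A.P (A.qState y)‖
  have ha : a ≤ 1 := (norm_mApply_le_of_isStarProjection hP _).trans_eq (A.norm_qState x)
  have hb : b ≤ 1 := (norm_mApply_le_of_isStarProjection hP _).trans_eq (A.norm_qState y)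
  have hab : |a - b| ≤ ‖A.qState x - A.qState y‖ :=
    (abs_norm_sub_norm_le _ _).trans <| by
      rw [← mApply_sub]
      exact norm_mApply_le_of_isStarProjection hP _
  calc |a ^ 2 - b ^ 2| = |a - b| * (a + b) := by
        rw [sq_sub_sq, abs_mul, abs_of_nonneg (by positivity : 0 ≤ a + b), mul_comm]
    _ ≤ ‖A.qState x - A.qState y‖ * 2 := by gcongr; linarith
    _ = 2 * ‖A.qState x - A.qState y‖ := mul_comm _ _

theorem exists_pos_abs_probAcc_sub_lt {c s y : List Alph} (hcs : c <:+ s) (hcy : c <:+ y)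
    (hc : k - 1 ≤ c.length) (z : List Alph) {ε : ℝ} (hε : 0 < ε) :
    ∃ d, 0 < d ∧
      |A.probAcc (s ++ (List.replicate d y).flatten ++ z) - A.probAcc (s ++ z)| < ε := by
  have hsphere : Set.MapsTo (A.run c y) (Metric.sphere 0 1) (Metric.sphere 0 1) := fun v hv => by
    simpa [A.norm_run] using hv
  obtain ⟨d, hd, hclose⟩ := (A.isometry_run c y).exists_pos_dist_iterate_lt
    (isCompact_sphere 0 1) (x := A.qState s)
    (fun m => hsphere.iterate m (by simp [A.norm_qState])) (half_pos hε)
  refine ⟨d, hd, (A.abs_probAcc_sub_le _ _).trans_lt ?_⟩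
  rw [A.qState_append_flatten_replicate_append hcy hc d z hcs, A.qState_append_of_suffix hcs hc z,
    ← dist_eq_norm, (A.isometry_run c z).dist_eq]
  linarith

end MultiQFA

theorem List.replicate_append_cons_inj {α : Type*} {x y : α} (hxy : x ≠ y) :
    ∀ {a b : ℕ} {r₁ r₂ : List α},
      replicate a x ++ y :: r₁ = replicate b x ++ y :: r₂ → a = b ∧ r₁ = r₂
  | 0, 0, _, _, h => ⟨rfl, by simpa using h⟩
  | 0, _ + 1, _, _, h => absurd (List.cons.inj h).1.symm hxy
  | _ + 1, 0, _, _, h => absurd (List.cons.inj h).1 hxy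
  | _ + 1, _ + 1, _, _, h => by
    obtain ⟨hab, hr⟩ := replicate_append_cons_inj hxy (List.cons.inj h).2
    exact ⟨congrArg (· + 1) hab, hr⟩

theorem replicate_false_append_true_mem_Lhp {h p a : ℕ} (ha : 1 ≤ a) (hp : p ∣ a + h + 1) :
    List.replicate a false ++ true :: List.replicate h false ∈ Lhp h p := by
  refine ⟨⟨[_], fun w hw => ?_, List.flatten_singleton.symm⟩, ?_⟩
  · rw [List.mem_singleton.mp hw]
    exact ⟨0, a, ha, by simp⟩
  · simpa [Nat.add_assoc] using Nat.mod_eq_zero_of_dvd hp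

theorem replicate_false_append_true_true_notMem_kleeneStar {h a : ℕ} (hh : 1 ≤ h) (ha : 1 ≤ a)
    (t : List Bool) : List.replicate a false ++ true :: true :: t ∉ kleeneStar (blockLang h) := by
  rintro ⟨_ | ⟨w, l⟩, hl, hx⟩
  · obtain _ | a := a
    · omega
    · simp [List.replicate_succ] at hx
  obtain ⟨_ | i, j, -, rfl⟩ := hl w List.mem_cons_self
  · simp only [List.replicate_zero, List.nil_append, List.flatten_cons, List.append_assoc,
      List.cons_append] at hx
    obtain ⟨-, hrest⟩ := List.replicate_append_cons_inj Bool.false_ne_true hx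
    obtain _ | h := h
    · omega
    · simp [List.replicate_succ] at hrest
  · obtain _ | a := a
    · omega
    · simp [List.replicate_succ] at hx

theorem stmt_14_general (h p : ℕ) (hh : 1 ≤ h) (hp : p.Prime) (k : ℕ) (n : ℕ)
    (A : MultiQFA Bool k n) (lam ε : ℝ) (hε : 0 < ε) :
    ¬ A.Recognizes (Lhp h p) lam ε := by
  rintro ⟨hacc, hrej⟩
  set a := p * (k + h + 2) - (h + 1)
  have hpa : k + h + 2 ≤ p * (k + h + 2) := Nat.le_mul_of_pos_left _ hp.pos
  set c := List.replicate (k - 1) false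
  set y := true :: true :: c
  set z := true :: List.replicate h false
  have hca : c <:+ List.replicate a false :=
    ⟨List.replicate (a - (k - 1)) false, by rw [← List.replicate_add]; congr 1; omega⟩
  obtain ⟨d, hd, hclose⟩ := A.exists_pos_abs_probAcc_sub_lt (y := y) hca ⟨[true, true], rfl⟩
    (List.length_replicate ..).ge z (by positivity : 0 < 2 * ε)
  have hin : List.replicate a false ++ z ∈ Lhp h p :=
    replicate_false_append_true_mem_Lhp (by omega) ⟨k + h + 2, by omega⟩
  have hout : List.replicate a false ++ (List.replicate d y).flatten ++ z ∉ Lhp h p := by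
    obtain ⟨e, rfl⟩ : ∃ e, d = e + 1 := ⟨d - 1, by omega⟩
    refine fun hmem => replicate_false_append_true_true_notMem_kleeneStar (a := a) hh (by omega)
      (c ++ (List.replicate e y).flatten ++ z) ?_
    simpa [y, List.replicate_succ] using hmem.1
  linarith [hacc _ hin, hrej _ hout, (abs_sub_lt_iff.mp hclose).2]

/-- For every `h ≥ 1`, prime `p`, and `k ≥ 1`, no `k`-letter 1QFA over
`{0,1}` recognizes `L(h,p)` with an isolated cut-point. -/
theorem stmt_14 (h p : ℕ) (hh : 1 ≤ h) (hp : p.Prime) (k : ℕ) (hk : 1 ≤ k) (n : ℕ)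
    (A : MultiQFA Bool k n) (lam ε : ℝ) (hlam : 0 < lam ∧ lam < 1) (hε : 0 < ε) :
    ¬ A.Recognizes (Lhp h p) lam ε :=
  stmt_14_general h p hh hp k n A lam ε hε

end
end
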